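/- arXiv:2209.06031 — 2 statements merged into one kernel-verified Lean document; each statement's English description precedes it below -/
import Mathlib

section
/- Vanishing of the order parameter at zero mass: for every β > 0 and every x ∈ Λ, the thermal expectation of the charge density vanishes, ⟨ρ(x)⟩_{β,0} = 0. -/
open Matrix Filter MeasureTheory

noncomputable section

/-- The periodic lattice `Λ = ({-L+1, …, L})^ν` with coordinates mod `2L`. -/
abbrev Site (ν L : ℕ) := Fin ν → ZMod (2 * L)

/-- The `μ`-th standard unit vector of the lattice. -/
def eVec (ν L : ℕ) (μ : Fin ν) : Site ν L := fun i => if i = μ then 1 else 0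

/-- The staggered sign `(-1)^{x⁽¹⁾+⋯+x⁽ᵛ⁾}`. -/
def sgn {ν L : ℕ} (x : Site ν L) : ℂ := (-1 : ℂ) ^ (∑ i, (x i).val)

/-- The exponents `θ_μ(x)` of the staggered hopping amplitudes. -/
def theta {ν L : ℕ} (μ : Fin ν) (x : Site ν L) : ℕ :=
  (∑ i : Fin ν, if (i : ℕ) < (μ : ℕ) then (x i).val else 0) +
    (if x μ = (L : ZMod (2 * L)) then 1 else 0)

variable {ν L N : ℕ}

/-- Canonical anticommutation relations for `ψ : Λ → M_N(ℂ)`. -/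
def CAR (ψ : Site ν L → Matrix (Fin N) (Fin N) ℂ) : Prop :=
  (∀ x y, ψ x * star (ψ y) + star (ψ y) * ψ x
      = if x = y then (1 : Matrix (Fin N) (Fin N) ℂ) else 0) ∧
  (∀ x y, ψ x * ψ y + ψ y * ψ x = 0)

/-- The charge density `ρ(x) = ψ(x)*ψ(x) - 1/2`. -/
def rho (ψ : Site ν L → Matrix (Fin N) (Fin N) ℂ) (x : Site ν L) :
    Matrix (Fin N) (Fin N) ℂ :=
  star (ψ x) * ψ x - (1 / 2 : ℂ) • 1

/-- The staggered hopping Hamiltonian `H_K`. -/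
def HK [NeZero (2 * L)] (κ : ℝ) (ψ : Site ν L → Matrix (Fin N) (Fin N) ℂ) :
    Matrix (Fin N) (Fin N) ℂ :=
  (Complex.I * (κ : ℂ)) • ∑ x : Site ν L, ∑ μ : Fin ν,
    ((-1 : ℂ) ^ theta μ x) •
      (star (ψ x) * ψ (x + eVec ν L μ) - star (ψ (x + eVec ν L μ)) * ψ x)

/-- The order parameter `O = Σ_x (-1)^{x⁽¹⁾+⋯+x⁽ᵛ⁾} ρ(x)`. -/
def orderOp [NeZero (2 * L)] (ψ : Site ν L → Matrix (Fin N) (Fin N) ℂ) :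
    Matrix (Fin N) (Fin N) ℂ :=
  ∑ x : Site ν L, sgn x • rho ψ x

/-- The four-fermion interaction `Σ_x Σ_μ ρ(x) ρ(x+e_μ)`. -/
def Hint [NeZero (2 * L)] (ψ : Site ν L → Matrix (Fin N) (Fin N) ℂ) :
    Matrix (Fin N) (Fin N) ℂ :=
  ∑ x : Site ν L, ∑ μ : Fin ν, rho ψ x * rho ψ (x + eVec ν L μ)

/-- The Hamiltonian `H(m) = H_K + m·O + g·H_int`. -/
def Ham [NeZero (2 * L)] (κ m g : ℝ) (ψ : Site ν L → Matrix (Fin N) (Fin N) ℂ) :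
    Matrix (Fin N) (Fin N) ℂ :=
  HK κ ψ + (m : ℂ) • orderOp ψ + (g : ℂ) • Hint ψ

/-- The thermal expectation `⟨A⟩ = tr(A e^{-βH}) / tr(e^{-βH})`. -/
def thermal (β : ℝ) (H A : Matrix (Fin N) (Fin N) ℂ) : ℂ :=
  (A * NormedSpace.exp ((-(β : ℂ)) • H)).trace /
    (NormedSpace.exp ((-(β : ℂ)) • H)).trace

/-! The particle–hole transformation `U = ∏ₓ (ψ(x) + ψ(x)*)`, a product of Majorana operators
taken in a fixed order, is invertible and satisfies `U ψ(y) = -ψ(y)* U` because the number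
`(2L)^ν` of sites is even. Hence `U` commutes with every hopping term and with every product
`ρ(x) ρ(y)`, so with `H(0)` and `e^{-βH(0)}`, while it anticommutes with `ρ(x)`. Conjugating by `U`
gives `tr(ρ(x) e^{-βH(0)}) = -tr(ρ(x) e^{-βH(0)})`. -/

structure IsCAR {ι A : Type*} [DecidableEq ι] [Ring A] [StarRing A] (ψ : ι → A) : Prop where
  mul_star_add_star_mul : ∀ x y, ψ x * star (ψ y) + star (ψ y) * ψ x = if x = y then 1 else 0
  mul_add_mul : ∀ x y, ψ x * ψ y + ψ y * ψ x = 0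

instance Matrix.instIsAddTorsionFree {m n R : Type*} [AddMonoid R] [IsAddTorsionFree R] :
    IsAddTorsionFree (Matrix m n R) :=
  inferInstanceAs (IsAddTorsionFree (m → n → R))

theorem IsUnit.trace_eq_zero_of_mul_eq_neg {n R : Type*} [Fintype n] [DecidableEq n]
    [CommRing R] [IsAddTorsionFree R] {U B : Matrix n n R} (hU : IsUnit U)
    (hUB : U * B = -(B * U)) : B.trace = 0 := by
  obtain ⟨u, rfl⟩ := hU
  refine self_eq_neg.mp ?_
  calc B.trace = ((↑u⁻¹ : Matrix n n R) * (u * B)).trace := by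
        rw [← mul_assoc, Units.inv_mul, one_mul]
    _ = -((↑u⁻¹ : Matrix n n R) * (B * u)).trace := by rw [hUB, mul_neg, trace_neg]
    _ = -B.trace := by rw [trace_mul_comm, mul_assoc, Units.mul_inv, mul_one]

section ParticleHole

variable {ι A : Type*} [DecidableEq ι] [Ring A] [StarRing A] {ψ : ι → A}

def majorana (ψ : ι → A) (x : ι) : A := ψ x + star (ψ x)

def majoranaProd (ψ : ι → A) (l : List ι) : A := (l.map (majorana ψ)).prod

def particleHole [Fintype ι] (ψ : ι → A) : A := majoranaProd ψ Finset.univ.toList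

omit [DecidableEq ι] in
@[simp]
theorem majoranaProd_nil : majoranaProd ψ [] = 1 := rfl

omit [DecidableEq ι] in
@[simp]
theorem majoranaProd_cons (a : ι) (l : List ι) :
    majoranaProd ψ (a :: l) = majorana ψ a * majoranaProd ψ l := List.prod_cons

omit [DecidableEq ι] in
theorem majoranaProd_append (s t : List ι) :
    majoranaProd ψ (s ++ t) = majoranaProd ψ s * majoranaProd ψ t := by
  simp only [majoranaProd, List.map_append, List.prod_append]

omit [DecidableEq ι] in
theorem majorana_star_comp : majorana (fun x => star (ψ x)) = majorana ψ := by
  funext x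
  simp only [majorana, star_star, add_comm]

omit [DecidableEq ι] in
theorem majoranaProd_star_comp (l : List ι) :
    majoranaProd (fun x => star (ψ x)) l = majoranaProd ψ l := by
  rw [majoranaProd, majorana_star_comp, majoranaProd]

namespace IsCAR

variable (h : IsCAR ψ)
include h

theorem star_comp : IsCAR fun x => star (ψ x) where
  mul_star_add_star_mul x y := by
    simpa only [star_star, add_comm, eq_comm (a := x)] using h.mul_star_add_star_mul y x
  mul_add_mul x y := by
    simpa only [star_mul, star_add, star_zero] using congrArg star (h.mul_add_mul y x)

theorem mul_self [IsAddTorsionFree A] (x : ι) : ψ x * ψ x = 0 :=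
  self_eq_neg.mp (eq_neg_of_add_eq_zero_left (h.mul_add_mul x x))

theorem majorana_mul_self [IsAddTorsionFree A] (x : ι) : majorana ψ x * majorana ψ x = 1 := by
  have hstar := h.star_comp.mul_self x
  simp only [majorana, add_mul, mul_add, h.mul_self x, hstar, zero_add, add_zero]
  simpa [add_comm] using h.mul_star_add_star_mul x x

theorem majorana_mul_apply_self [IsAddTorsionFree A] (x : ι) :
    majorana ψ x * ψ x = star (ψ x) * majorana ψ x := by
  have hstar := h.star_comp.mul_self x
  simp only [majorana, add_mul, mul_add, h.mul_self x, hstar, zero_add, add_zero]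

theorem majorana_mul_of_ne {x y : ι} (hxy : x ≠ y) :
    majorana ψ x * ψ y = -(ψ y * majorana ψ x) := by
  have hψψ := eq_neg_of_add_eq_zero_left (h.mul_add_mul x y)
  have hψψstar := h.mul_star_add_star_mul y x
  rw [if_neg hxy.symm] at hψψstar
  replace hψψstar := eq_neg_of_add_eq_zero_right hψψstar
  rw [majorana, add_mul, mul_add, hψψ, hψψstar, neg_add]

theorem isUnit_majoranaProd [IsAddTorsionFree A] (l : List ι) : IsUnit (majoranaProd ψ l) :=
  List.prod_isUnit fun _ hm => by
    obtain ⟨x, -, rfl⟩ := List.mem_map.mp hm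
    exact ⟨⟨_, _, h.majorana_mul_self x, h.majorana_mul_self x⟩, rfl⟩

theorem majoranaProd_mul_of_notMem {l : List ι} {y : ι} (hy : y ∉ l) :
    majoranaProd ψ l * ψ y = (-1 : ℤ) ^ l.length • (ψ y * majoranaProd ψ l) := by
  induction l with
  | nil => simp
  | cons a l ih =>
    rw [List.mem_cons, not_or] at hy
    rw [majoranaProd_cons, List.length_cons, mul_assoc, ih hy.2, mul_smul_comm, ← mul_assoc,
      h.majorana_mul_of_ne (Ne.symm hy.1), neg_mul, mul_assoc, smul_neg, ← neg_smul, pow_succ,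
      mul_neg_one]

theorem majoranaProd_mul_of_mem [IsAddTorsionFree A] {l : List ι} (hl : l.Nodup) {y : ι}
    (hy : y ∈ l) :
    majoranaProd ψ l * ψ y = -((-1 : ℤ) ^ l.length • (star (ψ y) * majoranaProd ψ l)) := by
  -- `ψ y` anticommutes past every factor except `majorana ψ y`, which turns it into `star (ψ y)`.
  obtain ⟨s, t, rfl⟩ := List.mem_iff_append.mp hy
  have hys : y ∉ s := fun hs => (List.nodup_append.mp hl).2.2 y hs y List.mem_cons_self rfl
  have hyt : y ∉ t := (List.nodup_cons.mp (List.nodup_append.mp hl).2.1).1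
  have hstar_s := h.star_comp.majoranaProd_mul_of_notMem hys
  rw [majoranaProd_star_comp] at hstar_s
  simp only [majoranaProd_append, majoranaProd_cons, List.length_append, List.length_cons]
  rw [mul_assoc, mul_assoc, h.majoranaProd_mul_of_notMem hyt, mul_smul_comm,
    ← mul_assoc (majorana ψ y), h.majorana_mul_apply_self, mul_smul_comm, ← mul_assoc,
    ← mul_assoc, hstar_s]
  simp only [smul_mul_assoc, mul_assoc, smul_smul, pow_add, pow_one, ← neg_smul]
  congr 1
  ring

section Fintype

variable [Fintype ι] [IsAddTorsionFree A]

theorem isUnit_particleHole : IsUnit (particleHole ψ) :=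
  h.isUnit_majoranaProd _

variable (hcard : Even (Fintype.card ι))
include hcard

theorem particleHole_mul (y : ι) : particleHole ψ * ψ y = -(star (ψ y) * particleHole ψ) := by
  rw [particleHole, h.majoranaProd_mul_of_mem (Finset.nodup_toList _) (Finset.mem_toList.mpr
    (Finset.mem_univ y)), Finset.length_toList, Finset.card_univ, hcard.neg_one_pow, one_smul]

theorem particleHole_mul_star (y : ι) :
    particleHole ψ * star (ψ y) = -(ψ y * particleHole ψ) := by
  simpa only [particleHole, majoranaProd_star_comp, star_star] using
    h.star_comp.particleHole_mul hcard y

theorem particleHole_mul_star_mul (x y : ι) :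
    particleHole ψ * (star (ψ x) * ψ y)
      = ((if x = y then 1 else 0) - star (ψ y) * ψ x) * particleHole ψ := by
  rw [← mul_assoc, h.particleHole_mul_star hcard, neg_mul, mul_assoc, h.particleHole_mul hcard,
    mul_neg, neg_neg, ← mul_assoc, ← h.mul_star_add_star_mul x y, add_sub_cancel_right]

theorem commute_particleHole_hopping (x y : ι) :
    Commute (particleHole ψ) (star (ψ x) * ψ y - star (ψ y) * ψ x) := by
  change _ * _ = _ * _
  rw [mul_sub, h.particleHole_mul_star_mul hcard, h.particleHole_mul_star_mul hcard]
  simp only [eq_comm (a := y)]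
  noncomm_ring

end Fintype

end IsCAR

end ParticleHole

theorem CAR.isCAR {ψ : Site ν L → Matrix (Fin N) (Fin N) ℂ} (h : CAR ψ) : IsCAR ψ :=
  ⟨h.1, h.2⟩

theorem even_card_site (ν L : ℕ) [NeZero (2 * L)] (hν : ν ≠ 0) :
    Even (Fintype.card (Site ν L)) := by
  rw [Fintype.card_fun, ZMod.card, Fintype.card_fin]
  exact (Nat.even_pow' hν).mpr (even_two_mul L)

section Site

variable [NeZero (2 * L)] {ψ : Site ν L → Matrix (Fin N) (Fin N) ℂ}
  (h : IsCAR ψ) (hcard : Even (Fintype.card (Site ν L)))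
include h hcard

namespace IsCAR

theorem particleHole_mul_rho (x : Site ν L) :
    particleHole ψ * rho ψ x = -(rho ψ x * particleHole ψ) := by
  rw [rho, mul_sub, h.particleHole_mul_star_mul hcard, if_pos rfl, mul_smul_comm, mul_one,
    sub_mul, sub_mul, smul_mul_assoc, one_mul]
  module

theorem commute_particleHole_HK (κ : ℝ) : Commute (particleHole ψ) (HK κ ψ) :=
  .smul_right (.sum_right _ _ _ fun _ _ => .sum_right _ _ _ fun _ _ =>
    .smul_right (h.commute_particleHole_hopping hcard _ _) _) _

theorem commute_particleHole_Hint : Commute (particleHole ψ) (Hint ψ) := by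
  refine .sum_right _ _ _ fun _ _ => .sum_right _ _ _ fun _ _ => ?_
  change _ * _ = _ * _
  rw [← mul_assoc, h.particleHole_mul_rho hcard, neg_mul, mul_assoc, h.particleHole_mul_rho hcard,
    mul_neg, neg_neg, mul_assoc]

theorem commute_particleHole_Ham_zero (κ g : ℝ) : Commute (particleHole ψ) (Ham κ 0 g ψ) := by
  rw [Ham, Complex.ofReal_zero, zero_smul, add_zero]
  exact (h.commute_particleHole_HK hcard κ).add_right
    ((h.commute_particleHole_Hint hcard).smul_right _)

end IsCAR

end Site

theorem charge_density_vanishes_at_zero_mass_general (ν L N : ℕ) [NeZero (2 * L)]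
    (hν : 2 ≤ ν)
    (ψ : Site ν L → Matrix (Fin N) (Fin N) ℂ) (hCAR : CAR ψ)
    (κ g : ℝ) (β : ℝ) (x : Site ν L) :
    thermal β (Ham κ 0 g ψ) (rho ψ x) = 0 := by
  have hψ := hCAR.isCAR
  have hcard := even_card_site ν L (by omega)
  set E := NormedSpace.exp ((-(β : ℂ)) • Ham κ 0 g ψ)
  have hE : Commute (particleHole ψ) E :=
    ((hψ.commute_particleHole_Ham_zero hcard κ g).smul_right _).exp_right
  have hanti : particleHole ψ * (rho ψ x * E) = -(rho ψ x * E * particleHole ψ) := by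
    rw [← mul_assoc, hψ.particleHole_mul_rho hcard, neg_mul, mul_assoc, hE.eq, mul_assoc]
  rw [thermal, hψ.isUnit_particleHole.trace_eq_zero_of_mul_eq_neg hanti, zero_div]

/-- **Vanishing of the order parameter at zero mass**: for every `β > 0` and every
site `x ∈ Λ`, the thermal expectation of the charge density vanishes,
`⟨ρ(x)⟩_{β,0} = 0`. -/
theorem charge_density_vanishes_at_zero_mass (ν L N : ℕ) [NeZero (2 * L)]
    (hν : 2 ≤ ν) (hL : 1 ≤ L) (hN : 1 ≤ N)
    (ψ : Site ν L → Matrix (Fin N) (Fin N) ℂ) (hCAR : CAR ψ)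
    (κ g : ℝ) (hg : 0 ≤ g) (β : ℝ) (hβ : 0 < β) (x : Site ν L) :
    thermal β (Ham κ 0 g ψ) (rho ψ x) = 0 :=
  charge_density_vanishes_at_zero_mass_general ν L N hν ψ hCAR κ g β x

end
end

section
/- Double commutator bound: for every dual momentum p ∈ Λ*, the double commutator with the zero-mass Hamiltonian satisfies [ρ̃_p, [H(0), ρ̃_{−p}]] = [ρ̃_p, [H_K, ρ̃_{−p}]] and its operator norm obeys ‖[ρ̃_p, [H(0), ρ̃_{−p}]]‖ ≤ 8|κ|ν. -/
open Matrix Filter MeasureTheory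

noncomputable section

variable {ν L N : ℕ}

/-- The dual momentum `p = (π n₁/L, …, π n_ν/L)` associated with `n ∈ Λ*`. -/
def momentum (ν L : ℕ) (n : Site ν L) : Fin ν → ℝ :=
  fun μ => Real.pi * ((n μ).val : ℝ) / (L : ℝ)

/-- The inner product `p · x` of a dual momentum `p` (labelled by `n`) with `x`. -/
def pdot (ν L : ℕ) (n x : Site ν L) : ℝ :=
  ∑ μ : Fin ν, momentum ν L n μ * ((x μ).val : ℝ)

/-- The Fourier mode `ρ̃_p = |Λ|^{-1/2} Σ_x e^{i p·x} ρ(x)` of the charge density. -/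
def rhoTilde [NeZero (2 * L)] (ψ : Site ν L → Matrix (Fin N) (Fin N) ℂ)
    (n : Site ν L) : Matrix (Fin N) (Fin N) ℂ :=
  ((Real.sqrt (Fintype.card (Site ν L)) : ℂ))⁻¹ •
    ∑ x : Site ν L, Complex.exp (Complex.I * ((pdot ν L n x : ℝ) : ℂ)) • rho ψ x

/-- The commutator `[A, B] = AB - BA`. -/
def commut (A B : Matrix (Fin N) (Fin N) ℂ) : Matrix (Fin N) (Fin N) ℂ :=
  A * B - B * A


/-!
The interaction is a sum of products of densities `ρ(x)`, which commute with one another, so it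
drops out of `[H(0), ρ̃_{-p}]`. Every hopping term `ψ(a)* ψ(b)` is an eigenvector of
`ad ρ̃_p` with eigenvalue `|Λ|^{-1/2} (e^{ip·b} - e^{ip·a})`, of modulus at most `2 |Λ|^{-1/2}`.
Hence each of the `|Λ| ν` bonds of `H_K` contributes a multiple of itself to the double
commutator, with coefficient of modulus at most `4 / |Λ|`; since the CAR force `‖ψ(x)‖ ≤ 1`,
a bond has norm at most `2`, and summing gives `8 |κ| ν`.
-/

section

open scoped Matrix.Norms.L2Operator

attribute [local instance] LieRing.ofAssociativeRing

theorem norm_le_one_of_mul_self_eq_zero_of_add_eq_one {E : Type*} [NormedRing E] [StarRing E]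
    [CStarRing E] {a : E} (ha : a * a = 0) (h : a * star a + star a * a = 1) : ‖a‖ ≤ 1 := by
  have hproj : IsStarProjection (star a * a) := by
    refine ⟨?_, IsSelfAdjoint.star_mul_self a⟩
    calc star a * a * (star a * a) = star a * (a * star a) * a := by noncomm_ring
      _ = star a * a - star (a * a) * (a * a) := by
        rw [eq_sub_of_add_eq h, star_mul]; noncomm_ring
      _ = star a * a := by simp [ha]
  have hsq : ‖a‖ * ‖a‖ ≤ 1 := CStarRing.norm_star_mul_self (x := a) ▸ hproj.norm_le
  nlinarith [norm_nonneg a]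

theorem Ring.lie_mul_mul_eq_anticomm {R : Type*} [Ring R] (a b c d : R) :
    ⁅a * b, c * d⁆ = a * (b * c + c * b) * d - a * c * (b * d + d * b)
      + (a * c + c * a) * d * b - c * (a * d + d * a) * b := by
  rw [Ring.lie_def]; noncomm_ring

theorem commut_eq_lie {N : ℕ} (A B : Matrix (Fin N) (Fin N) ℂ) : commut A B = ⁅A, B⁆ :=
  (Ring.lie_def A B).symm

section Lattice

variable {ν L N : ℕ}

def planeWave (n x : Site ν L) : ℂ := Complex.exp (Complex.I * (pdot ν L n x : ℂ))

theorem norm_planeWave (n x : Site ν L) : ‖planeWave n x‖ = 1 := by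
  rw [planeWave, mul_comm]; exact Complex.norm_exp_ofReal_mul_I _

def bond (ψ : Site ν L → Matrix (Fin N) (Fin N) ℂ) (a b : Site ν L) : Matrix (Fin N) (Fin N) ℂ :=
  star (ψ a) * ψ b - star (ψ b) * ψ a

variable [NeZero (2 * L)]

theorem rhoTilde_eq (ψ : Site ν L → Matrix (Fin N) (Fin N) ℂ) (n : Site ν L) :
    rhoTilde ψ n = (Real.sqrt (Fintype.card (Site ν L)) : ℂ)⁻¹ • ∑ x, planeWave n x • rho ψ x :=
  rfl

/-- The eigenvalue of `⁅·, ρ̃_p⁆` on the hopping term `ψ(a)* ψ(b)`. -/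
def hopPhase (n a b : Site ν L) : ℂ :=
  (Real.sqrt (Fintype.card (Site ν L)) : ℂ)⁻¹ * (planeWave n b - planeWave n a)

theorem hopPhase_swap (n a b : Site ν L) : hopPhase n b a = -hopPhase n a b := by
  simp only [hopPhase]; ring

theorem norm_hopPhase_le (n a b : Site ν L) :
    ‖hopPhase n a b‖ ≤ 2 / Real.sqrt (Fintype.card (Site ν L)) := by
  rw [hopPhase, norm_mul, norm_inv, Complex.norm_real, Real.norm_of_nonneg (Real.sqrt_nonneg _),
    inv_mul_eq_div]
  gcongr
  calc ‖planeWave n b - planeWave n a‖ ≤ ‖planeWave n b‖ + ‖planeWave n a‖ := norm_sub_le _ _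
    _ = 2 := by rw [norm_planeWave, norm_planeWave]; norm_num

theorem HK_eq (κ : ℝ) (ψ : Site ν L → Matrix (Fin N) (Fin N) ℂ) :
    HK κ ψ = (Complex.I * κ) • ∑ x, ∑ μ, ((-1 : ℂ) ^ theta μ x) • bond ψ x (x + eVec ν L μ) :=
  rfl

end Lattice

namespace CAR

variable {ν L N : ℕ} {ψ : Site ν L → Matrix (Fin N) (Fin N) ℂ}

theorem mul_self_eq_zero (h : CAR ψ) (x : Site ν L) : ψ x * ψ x = 0 := by
  have h2 : (2 : ℂ) • (ψ x * ψ x) = 0 := by rw [two_smul]; exact h.2 x x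
  exact (smul_eq_zero.mp h2).resolve_left two_ne_zero

theorem star_anticomm (h : CAR ψ) (x y : Site ν L) :
    star (ψ x) * star (ψ y) + star (ψ y) * star (ψ x) = 0 := by
  simpa [star_mul, add_comm] using congrArg star (h.2 x y)

theorem norm_le_one (h : CAR ψ) (x : Site ν L) : ‖ψ x‖ ≤ 1 :=
  norm_le_one_of_mul_self_eq_zero_of_add_eq_one (h.mul_self_eq_zero x) (by simpa using h.1 x x)

theorem norm_star_mul_le_one (h : CAR ψ) (a b : Site ν L) : ‖star (ψ a) * ψ b‖ ≤ 1 := by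
  calc ‖star (ψ a) * ψ b‖ ≤ ‖star (ψ a)‖ * ‖ψ b‖ := norm_mul_le _ _
    _ ≤ 1 * 1 := by rw [norm_star]; gcongr <;> exact h.norm_le_one _
    _ = 1 := one_mul 1

theorem norm_bond_le (h : CAR ψ) (a b : Site ν L) : ‖bond ψ a b‖ ≤ 2 := by
  calc ‖bond ψ a b‖ ≤ ‖star (ψ a) * ψ b‖ + ‖star (ψ b) * ψ a‖ := norm_sub_le _ _
    _ ≤ 1 + 1 := add_le_add (h.norm_star_mul_le_one a b) (h.norm_star_mul_le_one b a)
    _ = 2 := by norm_num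

/-- Of the four anticommutators in `Ring.lie_mul_mul_eq_anticomm`, only `{ψ b, ψ y*} = δ_{by}`
and `{ψ a*, ψ y} = δ_{ay}` survive. -/
theorem lie_star_mul_rho (h : CAR ψ) (a b y : Site ν L) :
    ⁅star (ψ a) * ψ b, rho ψ y⁆ =
      ((if b = y then 1 else 0) - (if a = y then 1 else 0) : ℂ) • (star (ψ a) * ψ b) := by
  rw [rho, lie_sub, lie_smul, Ring.lie_def _ (1 : Matrix _ _ ℂ), mul_one, one_mul, sub_self,
    smul_zero, sub_zero, Ring.lie_mul_mul_eq_anticomm, h.1 b y, h.2 b y, h.star_anticomm a y,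
    add_comm _ (ψ y * _), h.1 y a]
  by_cases hb : b = y <;> by_cases ha : a = y <;> subst_vars <;> simp [*, eq_comm (a := y)]

theorem commute_rho (h : CAR ψ) (x y : Site ν L) : Commute (rho ψ x) (rho ψ y) := by
  refine Commute.sub_left (commute_iff_lie_eq.mpr ?_) ((Commute.one_left _).smul_left _)
  simp [h.lie_star_mul_rho]

variable [NeZero (2 * L)]

theorem lie_star_mul_rhoTilde (h : CAR ψ) (a b n : Site ν L) :
    ⁅star (ψ a) * ψ b, rhoTilde ψ n⁆ = hopPhase n a b • (star (ψ a) * ψ b) := by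
  simp only [rhoTilde_eq, hopPhase, lie_smul, lie_sum, h.lie_star_mul_rho, smul_smul,
    ← Finset.sum_smul, mul_sub, Finset.sum_sub_distrib, mul_ite, mul_one, mul_zero,
    Finset.sum_ite_eq, Finset.mem_univ, if_true]

theorem lie_bond_rhoTilde (h : CAR ψ) (a b n : Site ν L) :
    ⁅bond ψ a b, rhoTilde ψ n⁆ = hopPhase n a b • (star (ψ a) * ψ b + star (ψ b) * ψ a) := by
  rw [bond, sub_lie, h.lie_star_mul_rhoTilde, h.lie_star_mul_rhoTilde, hopPhase_swap]
  module

theorem lie_rhoTilde_lie_bond_rhoTilde (h : CAR ψ) (a b n : Site ν L) :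
    ⁅rhoTilde ψ n, ⁅bond ψ a b, rhoTilde ψ (-n)⁆⁆ =
      -(hopPhase (-n) a b * hopPhase n a b) • bond ψ a b := by
  rw [h.lie_bond_rhoTilde, lie_smul, lie_add, ← lie_skew (rhoTilde ψ n) (star (ψ a) * ψ b),
    ← lie_skew (rhoTilde ψ n) (star (ψ b) * ψ a),
    h.lie_star_mul_rhoTilde, h.lie_star_mul_rhoTilde, hopPhase_swap n a b, bond]
  module

theorem norm_lie_rhoTilde_lie_bond_rhoTilde_le (h : CAR ψ) (a b n : Site ν L) :
    ‖⁅rhoTilde ψ n, ⁅bond ψ a b, rhoTilde ψ (-n)⁆⁆‖ ≤ 8 / Fintype.card (Site ν L) := by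
  have hcard : (0 : ℝ) < Fintype.card (Site ν L) := by exact_mod_cast Fintype.card_pos
  rw [h.lie_rhoTilde_lie_bond_rhoTilde, norm_smul, norm_neg, norm_mul]
  set r := Real.sqrt (Fintype.card (Site ν L))
  calc ‖hopPhase (-n) a b‖ * ‖hopPhase n a b‖ * ‖bond ψ a b‖ ≤ 2 / r * (2 / r) * 2 := by
        gcongr
        · exact norm_hopPhase_le _ _ _
        · exact norm_hopPhase_le _ _ _
        · exact h.norm_bond_le a b
    _ = 8 / Fintype.card (Site ν L) := by
        rw [div_mul_div_comm, Real.mul_self_sqrt hcard.le]; ring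

theorem commute_Hint_rhoTilde (h : CAR ψ) (n : Site ν L) : Commute (Hint ψ) (rhoTilde ψ n) := by
  have hrho : ∀ x, Commute (rho ψ x) (rhoTilde ψ n) := fun x =>
    (Commute.sum_right _ _ _ fun y _ => (h.commute_rho x y).smul_right _).smul_right _
  exact Commute.sum_left _ _ _ fun x _ => Commute.sum_left _ _ _ fun μ _ =>
    (hrho x).mul_left (hrho _)

theorem lie_Ham_zero_rhoTilde (h : CAR ψ) (κ g : ℝ) (n : Site ν L) :
    ⁅Ham κ 0 g ψ, rhoTilde ψ n⁆ = ⁅HK κ ψ, rhoTilde ψ n⁆ := by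
  simp [Ham, add_lie, smul_lie, (h.commute_Hint_rhoTilde n).lie_eq]

theorem norm_lie_rhoTilde_lie_HK_rhoTilde_le (h : CAR ψ) (κ : ℝ) (n : Site ν L) :
    ‖⁅rhoTilde ψ n, ⁅HK κ ψ, rhoTilde ψ (-n)⁆⁆‖ ≤ 8 * |κ| * ν := by
  have hcard : (0 : ℝ) < Fintype.card (Site ν L) := by exact_mod_cast Fintype.card_pos
  rw [HK_eq, smul_lie, lie_smul, norm_smul, norm_mul, Complex.norm_I, one_mul, Complex.norm_real,
    Real.norm_eq_abs]
  simp only [lie_sum, sum_lie, smul_lie, lie_smul]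
  calc _ ≤ |κ| * ∑ _x : Site ν L, ∑ _μ : Fin ν, (8 / Fintype.card (Site ν L) : ℝ) := by
        gcongr
        refine (norm_sum_le _ _).trans (Finset.sum_le_sum fun x _ =>
          (norm_sum_le _ _).trans (Finset.sum_le_sum fun μ _ => ?_))
        rw [norm_smul, norm_pow, norm_neg, norm_one, one_pow, one_mul]
        exact h.norm_lie_rhoTilde_lie_bond_rhoTilde_le _ _ _
    _ = 8 * |κ| * ν := by
        simp only [Finset.sum_const, Finset.card_univ, Fintype.card_fin, nsmul_eq_mul]
        field_simp

end CAR

end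

theorem double_commutator_bound_general (ν L N : ℕ) [NeZero (2 * L)]
    (ψ : Site ν L → Matrix (Fin N) (Fin N) ℂ) (hCAR : CAR ψ)
    (κ g : ℝ) (n : Site ν L) :
    (commut (rhoTilde ψ n) (commut (Ham κ 0 g ψ) (rhoTilde ψ (-n))) =
        commut (rhoTilde ψ n) (commut (HK κ ψ) (rhoTilde ψ (-n)))) ∧
    ‖Matrix.toEuclideanCLM (𝕜 := ℂ)
        (commut (rhoTilde ψ n) (commut (Ham κ 0 g ψ) (rhoTilde ψ (-n))))‖ ≤
      8 * |κ| * (ν : ℝ) := by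
  simp only [commut_eq_lie, hCAR.lie_Ham_zero_rhoTilde, true_and]
  -- the L2 operator norm of a matrix is, by definition, that of its `toEuclideanCLM`
  exact hCAR.norm_lie_rhoTilde_lie_HK_rhoTilde_le κ n

/-- **Double commutator bound**: `[ρ̃_p, [H(0), ρ̃_{-p}]] = [ρ̃_p, [H_K, ρ̃_{-p}]]`,
and its operator norm is bounded by `8|κ|ν`. -/
theorem double_commutator_bound (ν L N : ℕ) [NeZero (2 * L)]
    (hν : 2 ≤ ν) (hL : 1 ≤ L) (hN : 1 ≤ N)
    (ψ : Site ν L → Matrix (Fin N) (Fin N) ℂ) (hCAR : CAR ψ)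
    (κ g : ℝ) (hg : 0 ≤ g) (n : Site ν L) :
    (commut (rhoTilde ψ n) (commut (Ham κ 0 g ψ) (rhoTilde ψ (-n))) =
        commut (rhoTilde ψ n) (commut (HK κ ψ) (rhoTilde ψ (-n)))) ∧
    ‖Matrix.toEuclideanCLM (𝕜 := ℂ)
        (commut (rhoTilde ψ n) (commut (Ham κ 0 g ψ) (rhoTilde ψ (-n))))‖ ≤
      8 * |κ| * (ν : ℝ) :=
  double_commutator_bound_general ν L N ψ hCAR κ g n

end
end
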